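/- Hensel's lemma with rv-data: Let K be a Henselian valued field with valuation ord : K× → Γ, let f(y) = Σ_{i=0}^m a_i y^i be a polynomial with coefficients in K, and suppose x ∈ K and an index i₀ > 0 are such that ord(a_{i₀} x^{i₀}) = min_{0 ≤ i ≤ m} ord(a_i x^i), ord(f(x)) > ord(a_{i₀} x^{i₀}), and ord(f'(x)) ≤ ord(a_{i₀} x^{i₀ - 1}). Then there exists a unique b ∈ K with f(b) = 0 and ord(b - x) > ord(x). -/

import Mathlib

/-!
After the substitution `y = x z` and division by `c = a_{i₀} x^{i₀}`, the hypotheses say that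
`g(z) = c⁻¹ f(x z)` has integral coefficients and that `1` is a simple root of `g` modulo the
maximal ideal `𝔪`, so the claim is Hensel's lemma for `g` at `1`.

The Hensel property of a local ring is only postulated for monic polynomials. A polynomial
`q(t) = c₀ + c₁ t + ⋯` with `c₀ ∈ 𝔪` and `c₁` a unit is made monic by the substitution
`t = c₀ c₁⁻¹ / s`: clearing denominators gives a monic polynomial in `s` that reduces to
`sⁿ⁺¹ + sⁿ` modulo `𝔪`, with the simple root `s = -1`. Uniqueness comes from the expansion
`q(b) = q(a) + (b - a) (q'(a) + k (b - a))`, whose second factor is a unit.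
-/

open Polynomial IsLocalRing Finset

namespace Polynomial

variable {R : Type*} [CommRing R]

/-- `c₀⁻¹ sⁿ⁺¹ q(c₀ u / s)` for `q = ∑ cᵢ tⁱ` of degree `≤ n`, written without dividing by `c₀`. -/
noncomputable def henselReflect (q : R[X]) (u : R) (n : ℕ) : R[X] :=
  X ^ (n + 1) + ∑ j ∈ range (n + 1), C (q.coeff (j + 1) * (q.coeff 0 * u) ^ j * u) * X ^ (n - j)

theorem henselReflect_monic (q : R[X]) (u : R) (n : ℕ) : (henselReflect q u n).Monic := by
  refine monic_X_pow_add ((degree_sum_le _ _).trans_lt ?_)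
  refine (Finset.sup_lt_iff (WithBot.bot_lt_coe _)).2 fun j _ => ?_
  exact (degree_C_mul_X_pow_le _ _).trans_lt (by exact_mod_cast Nat.lt_succ_of_le (Nat.sub_le n j))

theorem coeff_zero_mul_eval_henselReflect (q : R[X]) (u : R) {n : ℕ} (hn : q.natDegree ≤ n)
    {a t : R} (hta : t * a = q.coeff 0 * u) :
    q.coeff 0 * (henselReflect q u n).eval a = a ^ (n + 1) * q.eval t := by
  rw [eval_eq_sum_range' (p := q) (n := n + 2) (by omega), sum_range_succ', henselReflect, eval_add,
    eval_finsetSum, mul_add, mul_sum, mul_add, mul_sum, eval_pow, eval_X]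
  simp only [eval_mul, eval_C, eval_pow, eval_X, pow_zero, mul_one]
  rw [add_comm]
  congr 1
  · refine sum_congr rfl fun j hj => ?_
    have hj : j ≤ n := Nat.lt_succ_iff.1 (mem_range.1 hj)
    have hpow : a ^ (n + 1) = a ^ (j + 1) * a ^ (n - j) := by rw [← pow_add]; congr 1; omega
    have hta' := congrArg (· ^ (j + 1)) hta
    rw [hpow]
    linear_combination (-(q.coeff (j + 1)) * a ^ (n - j)) * hta'
  · ring

section IsLocalRing

variable [IsLocalRing R]

theorem map_residue_henselReflect (q : R[X]) {u : R} (hu : q.coeff 1 * u = 1)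
    (h₀ : q.coeff 0 ∈ maximalIdeal R) (n : ℕ) :
    (henselReflect q u n).map (residue R) = X ^ (n + 1) + X ^ n := by
  have h₀' : residue R (q.coeff 0) = 0 := (residue_eq_zero_iff _).2 h₀
  have hu' : C (residue R (q.coeff 1)) * C (residue R u) = 1 := by
    rw [← C_mul, ← map_mul, hu, map_one, C_1]
  simp [henselReflect, Polynomial.map_sum, sum_range_succ', h₀', hu']

theorem isUnit_eval_of_sub_mem_maximalIdeal (p : R[X]) {a b : R} (ha : IsUnit (p.eval a))
    (hab : b - a ∈ maximalIdeal R) : IsUnit (p.eval b) := by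
  have hres : residue R b = residue R a := by
    rwa [← sub_eq_zero, ← map_sub, residue_eq_zero_iff]
  rw [← residue_ne_zero_iff_isUnit, ← eval₂_at_apply, ← eval_map, hres, eval_map, eval₂_at_apply,
    residue_ne_zero_iff_isUnit]
  exact ha

theorem eq_of_isRoot_of_sub_mem_maximalIdeal (p : R[X]) {a b : R} (ha : p.IsRoot a)
    (hb : p.IsRoot b) (hunit : IsUnit (p.derivative.eval a)) (hab : b - a ∈ maximalIdeal R) :
    a = b := by
  obtain ⟨k, hk⟩ := p.binomExpansion a (b - a)
  have hfactor : (b - a) * (p.derivative.eval a + k * (b - a)) = 0 := by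
    rw [add_sub_cancel, hb.eq_zero, ha.eq_zero] at hk
    linear_combination -hk
  have hunit' : IsUnit (p.derivative.eval a + k * (b - a)) := by
    rw [← residue_ne_zero_iff_isUnit, map_add, map_mul, (residue_eq_zero_iff _).2 hab, mul_zero,
      add_zero, residue_ne_zero_iff_isUnit]
    exact hunit
  exact (sub_eq_zero.1 (hunit'.mul_left_eq_zero.1 hfactor)).symm

end IsLocalRing

end Polynomial

namespace HenselianLocalRing

variable {R : Type*} [CommRing R] [HenselianLocalRing R]

theorem exists_isRoot_mem_maximalIdeal (q : R[X]) (h₀ : q.coeff 0 ∈ maximalIdeal R)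
    (h₁ : IsUnit (q.coeff 1)) : ∃ t ∈ maximalIdeal R, q.IsRoot t := by
  obtain ⟨u, hu⟩ := h₁.exists_right_inv
  set P := q.henselReflect u q.natDegree
  have hres := q.map_residue_henselReflect hu h₀ q.natDegree
  have hP₀ : P.eval (-1) ∈ maximalIdeal R := by
    rw [← residue_eq_zero_iff, ← eval₂_at_apply, ← eval_map, hres]
    simp [pow_succ]
  have hP₁ : IsUnit (P.derivative.eval (-1)) := by
    rw [← residue_ne_zero_iff_isUnit, ← eval₂_at_apply, ← eval_map, ← derivative_map, hres,
      show (X ^ (q.natDegree + 1) + X ^ q.natDegree : (ResidueField R)[X])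
        = X ^ q.natDegree * (X + 1) by ring]
    simp
  obtain ⟨a, ha, ha₁⟩ := is_henselian P (q.henselReflect_monic u _) (-1) hP₀ hP₁
  have hunit : IsUnit a := by
    rw [← residue_ne_zero_iff_isUnit]
    rw [sub_neg_eq_add, ← residue_eq_zero_iff, map_add, map_one, add_eq_zero_iff_eq_neg] at ha₁
    simp [ha₁]
  refine ⟨q.coeff 0 * u * ↑hunit.unit⁻¹, Ideal.mul_mem_right _ _ (Ideal.mul_mem_right _ _ h₀), ?_⟩
  have hreflect := q.coeff_zero_mul_eval_henselReflect u le_rfl (a := a)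
    (t := q.coeff 0 * u * ↑hunit.unit⁻¹) (by rw [mul_assoc, IsUnit.val_inv_mul, mul_one])
  rw [ha.eq_zero, mul_zero, eq_comm] at hreflect
  exact (hunit.pow _).mul_right_eq_zero.1 hreflect

theorem existsUnique_isRoot_sub_mem_maximalIdeal (p : R[X]) {a₀ : R}
    (h₀ : p.eval a₀ ∈ maximalIdeal R) (h₁ : IsUnit (p.derivative.eval a₀)) :
    ∃! a, p.IsRoot a ∧ a - a₀ ∈ maximalIdeal R := by
  obtain ⟨t, ht, hroot⟩ := exists_isRoot_mem_maximalIdeal (taylor a₀ p)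
    (by rwa [taylor_coeff_zero]) (by rwa [taylor_coeff_one])
  refine ⟨t + a₀, ⟨by rwa [IsRoot, ← taylor_eval], by rwa [add_sub_cancel_right]⟩, ?_⟩
  rintro b ⟨hb, hba₀⟩
  have hunit := p.derivative.isUnit_eval_of_sub_mem_maximalIdeal h₁ hba₀
  refine p.eq_of_isRoot_of_sub_mem_maximalIdeal hb (by rwa [IsRoot, ← taylor_eval]) hunit ?_
  rw [show t + a₀ - b = t - (b - a₀) by ring]
  exact Ideal.sub_mem _ ht hba₀

end HenselianLocalRing

namespace Valuation

variable {K Γ₀ : Type*} [Field K] [LinearOrderedCommGroupWithZero Γ₀] (v : Valuation K Γ₀)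
  [HenselianLocalRing v.valuationSubring]

theorem existsUnique_eval_eq_zero_valuation_sub_lt_one (g : K[X])
    (hg : ∀ i, v (g.coeff i) ≤ 1) {a₀ : K} (ha₀ : v a₀ ≤ 1) (h₀ : v (g.eval a₀) < 1)
    (h₁ : 1 ≤ v (g.derivative.eval a₀)) : ∃! a, g.eval a = 0 ∧ v (a - a₀) < 1 := by
  set O := v.valuationSubring
  obtain ⟨p, rfl⟩ := (lifts_iff_set_range _).1 <|
    (lifts_iff_coeff_lifts (f := algebraMap O K) g).2 fun n => ⟨⟨g.coeff n, hg n⟩, rfl⟩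
  have heval (r : O[X]) (z : O) : (r.map (algebraMap O K)).eval (z : K) = ↑(r.eval z) := by
    rw [eval_map]
    exact eval₂_at_apply (algebraMap O K) z
  have hmem (z : K) (hz : v (z - a₀) < 1) : v z ≤ 1 := by
    simpa using v.map_add_le hz.le ha₀
  lift a₀ to O using ha₀
  have h₀' : p.eval a₀ ∈ maximalIdeal O := by
    rwa [mem_maximalIdeal_iff, ← heval]
  have h₁' : IsUnit (p.derivative.eval a₀) := by
    by_contra h
    rw [derivative_map, heval] at h₁
    exact h₁.not_gt ((mem_maximalIdeal_iff _ v).1 h)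
  obtain ⟨a, ⟨ha, ha'⟩, huniq⟩ :=
    HenselianLocalRing.existsUnique_isRoot_sub_mem_maximalIdeal p h₀' h₁'
  refine ⟨a, ⟨by rw [heval, ha.eq_zero]; rfl, (mem_maximalIdeal_iff _ v).1 ha'⟩, ?_⟩
  rintro z ⟨hz, hz'⟩
  have hroot : p.IsRoot ⟨z, hmem z hz'⟩ := Subtype.ext (by rw [← heval]; exact hz)
  exact congrArg Subtype.val (huniq ⟨z, hmem z hz'⟩ ⟨hroot, (mem_maximalIdeal_iff _ v).2 hz'⟩)

theorem existsUnique_eval_eq_zero_valuation_sub_lt (f : K[X]) {x c : K}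
    (hf : ∀ i, v (f.coeff i * x ^ i) ≤ v c) (h₀ : v (f.eval x) < v c)
    (h₁ : v c ≤ v x * v (f.derivative.eval x)) :
    ∃! b, f.eval b = 0 ∧ v (b - x) < v x := by
  have hc : 0 < v c := zero_le.trans_lt h₀
  have hx : 0 < v x := by
    refine zero_lt_iff.2 fun hx => hc.not_ge ?_
    simpa [hx] using h₁
  set g := C c⁻¹ * f.comp (C x * X)
  have hg (i : ℕ) : v (g.coeff i) ≤ 1 := by
    rw [coeff_C_mul, comp_C_mul_X_coeff, map_mul, map_inv₀, inv_mul_le_one₀ hc]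
    exact hf i
  have hg₀ : v (g.eval 1) < 1 := by
    simpa [g, inv_mul_lt_one₀ hc] using h₀
  have hg₁ : 1 ≤ v (g.derivative.eval 1) := by
    simpa [g, derivative_comp, one_le_inv_mul₀ hc] using h₁
  refine ((Equiv.mulLeft₀ x (v.ne_zero_iff.1 hx.ne')).existsUnique_congr fun z => ?_).1
    (v.existsUnique_eval_eq_zero_valuation_sub_lt_one g hg (by simp) hg₀ hg₁)
  have hxz : x * z - x = x * (z - 1) := by ring
  simp [g, hxz, v.ne_zero_iff.1 hc.ne', mul_lt_iff_lt_one_right hx]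

end Valuation

theorem henselian_root_with_rv_data_general
    (K : Type*) [Field K] (Γ₀ : Type*) [LinearOrderedCommGroupWithZero Γ₀]
    [hv : Valued K Γ₀]
    [HenselianLocalRing (Valued.v (R := K) (Γ₀ := Γ₀)).valuationSubring]
    (f : Polynomial K) (x : K)
    (i₀ : ℕ) (hi₀pos : 0 < i₀)
    (hmin : ∀ i ≤ f.natDegree,
      Valued.v (f.coeff i * x ^ i) ≤ Valued.v (f.coeff i₀ * x ^ i₀))
    (hfx : Valued.v (f.eval x) < Valued.v (f.coeff i₀ * x ^ i₀))
    (hf'x : Valued.v (f.coeff i₀ * x ^ (i₀ - 1)) ≤ Valued.v ((Polynomial.derivative f).eval x)) :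
    ∃! b : K, f.eval b = 0 ∧ Valued.v (b - x) < Valued.v x := by
  refine Valued.v.existsUnique_eval_eq_zero_valuation_sub_lt f (fun i => ?_) hfx ?_
  · rcases le_or_gt i f.natDegree with hi | hi
    · exact hmin i hi
    · simp [coeff_eq_zero_of_natDegree_lt hi]
  · calc Valued.v (f.coeff i₀ * x ^ i₀) = Valued.v x * Valued.v (f.coeff i₀ * x ^ (i₀ - 1)) := by
          rw [← map_mul, mul_left_comm, ← pow_succ', Nat.sub_add_cancel hi₀pos]
      _ ≤ Valued.v x * Valued.v (f.derivative.eval x) := by gcongr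

/-- Hensel's lemma with rv-data: if `K` is a Henselian valued field,
`f` a polynomial over `K`, `x ∈ K` nonzero and `i₀ > 0` an index such that the
term `a_{i₀} x^{i₀}` has minimal valuation among all terms `a_i x^i`,
`ord f(x) > ord (a_{i₀} x^{i₀})` and `ord f'(x) ≤ ord (a_{i₀} x^{i₀-1})`,
then there is a unique `b` with `f(b) = 0` and `ord (b - x) > ord x`
(i.e. `rv b = rv x`).  (Written multiplicatively: `ord u > ord w ↔ v u < v w`.) -/
theorem henselian_root_with_rv_data
    (K : Type*) [Field K] (Γ₀ : Type*) [LinearOrderedCommGroupWithZero Γ₀]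
    [hv : Valued K Γ₀]
    [HenselianLocalRing (Valued.v (R := K) (Γ₀ := Γ₀)).valuationSubring]
    (f : Polynomial K) (x : K) (hx : x ≠ 0)
    (i₀ : ℕ) (hi₀pos : 0 < i₀) (hi₀le : i₀ ≤ f.natDegree)
    (hmin : ∀ i ≤ f.natDegree,
      Valued.v (f.coeff i * x ^ i) ≤ Valued.v (f.coeff i₀ * x ^ i₀))
    (hfx : Valued.v (f.eval x) < Valued.v (f.coeff i₀ * x ^ i₀))
    (hf'x : Valued.v (f.coeff i₀ * x ^ (i₀ - 1)) ≤ Valued.v ((Polynomial.derivative f).eval x)) :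
    ∃! b : K, f.eval b = 0 ∧ Valued.v (b - x) < Valued.v x :=
  henselian_root_with_rv_data_general K Γ₀ (hv := hv) f x i₀ hi₀pos hmin hfx hf'x
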